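/- arXiv:2307.07716 — 7 statements merged into one kernel-verified Lean document; each statement's English description precedes it below -/
import Mathlib

section
/- Let A be a finite poset with N elements, Ξ_N = {ξ_1 < ... < ξ_N} a linearly ordered set of N elements, and B = {β_1,...,β_n} ⊆ A with β_1 ≺ β_2 ≺ ... ≺ β_n a chain. For each k let Π_k = {α ∈ A : α ⪯ β_k}. Then the minimum of Σ_{k=1}^n f(β_k) over all non-decreasing bijections f : A → Ξ_N (with values summed in an ordered commutative monoid) equals Σ_{k=1}^n ξ_{|Π_k|}. -/
/-!
Every non-decreasing bijection `f` sends the down-set `Π_k` of `β k` injectively below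
`f (β k)`, so `f (β k)` is at least the `|Π_k|`-th value; this gives the lower bound termwise.
For the optimum, rank each `α` by the number of chain elements it lies *not* below, and break
ties by a linear extension of `A`. Listing `A` in this lexicographic order gives a non-decreasing
bijection under which each `Π_k` is exactly the set of elements up to `β k`, so `β k` lands on
`ξ |Π_k|` for every `k` simultaneously.
-/

open Finset Function

section Position

variable {A L : Type*} [Fintype A] [LinearOrder L] (key : A → L)

def keyPos (x : A) : ℕ := #{y | key y ≤ key x}

variable {key}

lemma keyPos_le_keyPos {a b : A} (h : key a ≤ key b) : keyPos key a ≤ keyPos key b :=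
  card_le_card fun _ hy => by simp only [mem_filter, mem_univ, true_and] at hy ⊢; exact hy.trans h

lemma keyPos_lt_keyPos {a b : A} (h : key a < key b) : keyPos key a < keyPos key b := by
  refine card_lt_card ⟨fun y hy => ?_, fun hsub => ?_⟩
  · simp only [mem_filter, mem_univ, true_and] at hy ⊢
    exact hy.trans h.le
  · have hb : b ∈ ({y | key y ≤ key a} : Finset A) := hsub (by simp)
    simp only [mem_filter, mem_univ, true_and] at hb
    exact hb.not_gt h

lemma keyPos_injective (hkey : Injective key) : Injective (keyPos key) := by
  intro a b hab
  apply hkey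
  by_contra hne
  rcases lt_or_gt_of_ne hne with h | h
  · exact (keyPos_lt_keyPos h).ne hab
  · exact (keyPos_lt_keyPos h).ne' hab

lemma keyPos_mem_Icc (x : A) : keyPos key x ∈ Set.Icc 1 (Fintype.card A) :=
  ⟨card_pos.mpr ⟨x, by simp⟩, card_filter_le _ _⟩

lemma range_keyPos (hkey : Injective key) :
    Set.range (keyPos key) = Set.Icc 1 (Fintype.card A) := by
  have himage : univ.image (keyPos key) = Icc 1 (Fintype.card A) := by
    refine eq_of_subset_of_card_le (fun m hm => ?_) ?_
    · obtain ⟨x, -, rfl⟩ := mem_image.mp hm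
      exact mem_Icc.mpr (keyPos_mem_Icc x)
    · rw [card_image_of_injective _ (keyPos_injective hkey), Nat.card_Icc, card_univ]
      omega
  rw [← coe_Icc, ← himage, coe_image, coe_univ, Set.image_univ]

end Position

section ChainKey

variable {A : Type*} [PartialOrder A] [DecidableLE A] {n : ℕ} (β : Fin n → A)

def chainRank (x : A) : ℕ := #{l | ¬ x ≤ β l}

variable {β}

lemma chainRank_mono : Monotone (chainRank β) := fun _ _ hab =>
  card_le_card fun _ hl => by
    simp only [mem_filter, mem_univ, true_and] at hl ⊢
    exact fun h => hl (hab.trans h)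

lemma chainRank_le_iff (hβ : Monotone β) (x : A) (k : Fin n) :
    chainRank β x ≤ k ↔ x ≤ β k := by
  constructor
  · intro hrank
    by_contra hx
    have hsub : Iic k ⊆ ({l | ¬ x ≤ β l} : Finset (Fin n)) := fun l hl => by
      simp only [mem_filter, mem_univ, true_and]
      exact fun h => hx (h.trans (hβ (mem_Iic.mp hl)))
    have := (Fin.card_Iic k).symm.trans_le (card_le_card hsub)
    unfold chainRank at hrank
    omega
  · intro hx
    have hsub : ({l | ¬ x ≤ β l} : Finset (Fin n)) ⊆ Iio k := fun l hl => by
      simp only [mem_filter, mem_univ, true_and] at hl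
      exact mem_Iio.mpr (lt_of_not_ge fun hkl => hl (hx.trans (hβ hkl)))
    exact (card_le_card hsub).trans (Fin.card_Iio k).le

variable (β)

noncomputable def chainKey (x : A) : ℕ ×ₗ LinearExtension A := toLex (chainRank β x, toLinearExtension x)

variable {β}

lemma chainKey_injective : Injective (chainKey β) := fun _ _ h =>
  congrArg Prod.snd (toLex.injective h)

lemma chainKey_mono : Monotone (chainKey β) := fun a b hab => by
  rcases (chainRank_mono hab).eq_or_lt with h | h
  · exact Prod.Lex.toLex_le_toLex.mpr (Or.inr ⟨h, toLinearExtension.monotone hab⟩)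
  · exact Prod.Lex.toLex_le_toLex.mpr (Or.inl h)

lemma chainKey_le_chainKey_iff (hβ : Monotone β) (x : A) (k : Fin n) :
    chainKey β x ≤ chainKey β (β k) ↔ x ≤ β k := by
  refine ⟨fun h => ?_, fun h => chainKey_mono h⟩
  have hrank : chainRank β x ≤ chainRank β (β k) := by
    rcases Prod.Lex.toLex_le_toLex.mp h with h | ⟨h, -⟩
    exacts [h.le, h.le]
  exact (chainRank_le_iff hβ x k).mp (hrank.trans ((chainRank_le_iff hβ _ k).mpr le_rfl))

lemma keyPos_chainKey (hβ : Monotone β) [Fintype A] (k : Fin n) :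
    keyPos (chainKey β) (β k) = #{x | x ≤ β k} := by
  unfold keyPos
  congr 1
  exact filter_congr fun x _ => chainKey_le_chainKey_iff hβ x k

end ChainKey

lemma card_filter_le_le_of_monotone_of_injective {A : Type*} [Preorder A] [Fintype A]
    [DecidableLE A] {p : A → ℕ} (hp : Monotone p) (hinj : Injective p) (hpos : ∀ x, 1 ≤ p x)
    (a : A) : #{x | x ≤ a} ≤ p a := by
  calc #{x | x ≤ a} ≤ #(Icc 1 (p a)) := by
        refine card_le_card_of_injOn p (fun x hx => ?_) hinj.injOn
        simp only [coe_filter, mem_univ, true_and, Set.mem_ofPred_eq] at hx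
        exact mem_Icc.mpr ⟨hpos x, hp hx⟩
    _ = p a := by simp

lemma apply_card_filter_le_le {A Ξ : Type*} [PartialOrder A] [Fintype A] [DecidableLE A]
    [LinearOrder Ξ] {N : ℕ} {ξ : ℕ → Ξ} (hξ : StrictMonoOn ξ (Set.Icc 1 N)) {f : A → Ξ}
    (hf : Monotone f) (hinj : Injective f) (hrange : Set.range f ⊆ ξ '' Set.Icc 1 N) (a : A) :
    ξ #{x | x ≤ a} ≤ f a := by
  choose p hpN hp using fun x => hrange (Set.mem_range_self x)
  have hp_mono : Monotone p := fun x y hxy =>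
    (hξ.le_iff_le (hpN x) (hpN y)).mp (by simpa only [hp] using hf hxy)
  have hp_inj : Injective p := fun x y hxy => hinj (by rw [← hp x, ← hp y, hxy])
  have hcard := card_filter_le_le_of_monotone_of_injective hp_mono hp_inj (fun x => (hpN x).1) a
  rw [← hp a]
  exact hξ.monotoneOn ⟨card_pos.mpr ⟨a, by simp⟩, hcard.trans (hpN a).2⟩ (hpN a) hcard

/-- If `β 0 ≺ β 1 ≺ ⋯ ≺ β (n-1)` is a chain in a finite poset `A` with `N` elements, then the
minimum of `∑ k, f (β k)` over all non-decreasing bijections `f : A → Ξ_N = {ξ 1 < ⋯ < ξ N}`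
equals `∑ k, ξ |Π_k|`, where `Π_k = {α : α ⪯ β k}`. -/
theorem min_sum_over_chain
    {A : Type*} [PartialOrder A] [Fintype A]
    {Ξ : Type*} [AddCommMonoid Ξ] [LinearOrder Ξ] [IsOrderedCancelAddMonoid Ξ]
    (N : ℕ) (hA : Fintype.card A = N) (ξ : ℕ → Ξ)
    (hξ : ∀ i j, 1 ≤ i → i < j → j ≤ N → ξ i < ξ j)
    (n : ℕ) (β : Fin n → A) (hchain : ∀ k l : Fin n, k < l → β k < β l) :
    IsLeast
      {S : Ξ | ∃ f : A → Ξ, Monotone f ∧ Function.Injective f ∧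
        Set.range f = ξ '' Set.Icc 1 N ∧ S = ∑ k : Fin n, f (β k)}
      (∑ k : Fin n, ξ ({α : A | α ≤ β k}.ncard)) := by
  classical
  subst hA
  have hξ' : StrictMonoOn ξ (Set.Icc 1 (Fintype.card A)) := fun i hi j hj hij =>
    hξ i j hi.1 hij hj.2
  have hβ : Monotone β := StrictMono.monotone fun k l => hchain k l
  have hncard (k : Fin n) : {α : A | α ≤ β k}.ncard = #{α | α ≤ β k} := by
    simp [Set.ncard_eq_toFinset_card']
  simp only [hncard]
  refine ⟨⟨ξ ∘ keyPos (chainKey β), fun a b hab => ?_, ?_, ?_, ?_⟩, ?_⟩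
  · exact hξ'.monotoneOn (keyPos_mem_Icc a) (keyPos_mem_Icc b)
      (keyPos_le_keyPos (chainKey_mono hab))
  · exact fun a b h => keyPos_injective chainKey_injective
      (hξ'.injOn (keyPos_mem_Icc a) (keyPos_mem_Icc b) h)
  · rw [Set.range_comp, range_keyPos chainKey_injective]
  · simp only [comp_apply, keyPos_chainKey hβ]
  · rintro _ ⟨f, hf, hinj, hrange, rfl⟩
    exact sum_le_sum fun k _ => apply_card_filter_le_le hξ' hf hinj hrange.le (β k)
end

section
/- Let A be a finite poset with N elements, Ξ_N = {ξ_1 < ... < ξ_N}, and B = {β_1,...,β_n} ⊆ A a chain with β_1 ≺ ... ≺ β_n. For each k let Π^k = {α ∈ A : β_k ⪯ α}. Then the maximum of Σ_{k=1}^n f(β_k) over all non-decreasing bijections f : A → Ξ_N equals Σ_{k=1}^n ξ_{N - |Π^k| + 1}. -/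
/-!
A non-decreasing bijection `f` maps the up-set `Π^k` of `β k` injectively into the values
`≥ f (β k)`, so `f (β k) ≤ ξ (N - |Π^k| + 1)`. The bounds are attained
for all `k` at once by a linear extension in which every `Π^k` is a final segment. As the `Π^k`
are nested, one is obtained by ordering `A` first by the largest `k` with `β k ≤ γ` and then by
an arbitrary linear extension.
-/

open Finset

theorem exists_equivFin_lt_iff_lt {A B : Type*} [Fintype A] [LinearOrder B] {φ : A → B}
    (hφ : Function.Injective φ) :
    ∃ e : A ≃ Fin (Fintype.card A), ∀ a b, e a < e b ↔ φ a < φ b := by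
  classical
  let r : A ≃ Set.range φ := Equiv.ofInjective φ hφ
  let o : Fin (Fintype.card A) ≃o Set.range φ :=
    Fintype.orderIsoFinOfCardEq _ (Fintype.card_congr r).symm
  exact ⟨r.trans o.symm.toEquiv, fun a b => o.symm.lt_iff_lt⟩

theorem exists_equivFin_strictMono_of_monotone {A α : Type*} [PartialOrder A] [Fintype A]
    [LinearOrder α] {L : A → α} (hL : Monotone L) :
    ∃ e : A ≃ Fin (Fintype.card A), StrictMono e ∧ ∀ a b, L a < L b → e a < e b := by
  let φ : A → α ×ₗ LinearExtension A := fun a => toLex (L a, toLinearExtension a)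
  obtain ⟨e, he⟩ := exists_equivFin_lt_iff_lt (φ := φ) fun a b h =>
    congrArg (fun p => (ofLex p).2) h
  refine ⟨e, fun a b hab => (he a b).2 ?_,
    fun a b hab => (he a b).2 (Prod.Lex.toLex_lt_toLex.2 (Or.inl hab))⟩
  rcases (hL hab.le).lt_or_eq with h | h
  · exact Prod.Lex.toLex_lt_toLex.2 (Or.inl h)
  · exact Prod.Lex.toLex_lt_toLex.2
      (Or.inr ⟨h, (toLinearExtension.monotone hab.le).lt_of_ne fun h' => hab.ne h'⟩)

section Chain

variable {A ι : Type*} [PartialOrder A] [LinearOrder ι] [Fintype ι]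

open Classical in
noncomputable def chainIndex (β : ι → A) (γ : A) : WithBot ι :=
  (univ.filter fun k => β k ≤ γ).max

theorem chainIndex_mono (β : ι → A) : Monotone (chainIndex β) := by
  intro a b hab
  classical
  exact max_mono fun k hk => by
    simp only [mem_filter, mem_univ, true_and] at hk ⊢
    exact hk.trans hab

theorem coe_le_chainIndex_iff {β : ι → A} (hβ : Monotone β) {k : ι} {γ : A} :
    (k : WithBot ι) ≤ chainIndex β γ ↔ β k ≤ γ := by
  classical
  refine ⟨fun h => ?_, fun h => le_max (by simpa using h)⟩
  obtain ⟨j, hj⟩ := WithBot.ne_bot_iff_exists.1 (ne_bot_of_le_ne_bot WithBot.coe_ne_bot h)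
  have hmem := mem_of_max hj.symm
  simp only [mem_filter, mem_univ, true_and] at hmem
  exact (hβ (WithBot.coe_le_coe.1 (hj ▸ h))).trans hmem

theorem exists_equivFin_strictMono_le_iff [Fintype A] {β : ι → A} (hβ : Monotone β) :
    ∃ e : A ≃ Fin (Fintype.card A), StrictMono e ∧ ∀ k γ, e (β k) ≤ e γ ↔ β k ≤ γ := by
  obtain ⟨e, he, hL⟩ := exists_equivFin_strictMono_of_monotone (chainIndex_mono β)
  refine ⟨e, he, fun k γ => ⟨fun h => ?_, fun h => he.monotone h⟩⟩
  by_contra hk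
  have hγ : chainIndex β γ < k := not_le.1 fun h' => hk ((coe_le_chainIndex_iff hβ).1 h')
  have hβk : (k : WithBot ι) ≤ chainIndex β (β k) := (coe_le_chainIndex_iff hβ).2 le_rfl
  exact (hL γ (β k) (hγ.trans_le hβk)).not_ge h

end Chain

theorem ncard_Ici_eq_sub {A : Type*} [Preorder A] {N : ℕ} (e : A ≃ Fin N) {a : A}
    (he : ∀ γ, e a ≤ e γ ↔ a ≤ γ) : (Set.Ici a).ncard = N - e a := by
  have : Set.Ici a = e ⁻¹' Set.Ici (e a) := Set.ext fun γ => (he γ).symm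
  rw [this, Set.ncard_preimage_of_injective_subset_range e.injective (by simp),
    ← Finset.coe_Ici, Set.ncard_coe_finset, Fin.card_Ici]

theorem apply_le_of_range_eq_image {A Ξ : Type*} [Preorder A] [Finite A] [LinearOrder Ξ] {N : ℕ}
    {ξ : ℕ → Ξ} (hξ : StrictMonoOn ξ (Set.Icc 1 N)) {f : A → Ξ} (hf : Monotone f)
    (hinj : Function.Injective f) (hrange : Set.range f = ξ '' Set.Icc 1 N) (a : A) :
    f a ≤ ξ (N - (Set.Ici a).ncard + 1) := by
  obtain ⟨i, ⟨hi1, hiN⟩, hfa⟩ : f a ∈ ξ '' Set.Icc 1 N := hrange ▸ Set.mem_range_self a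
  have hmaps : ∀ γ ∈ Set.Ici a, f γ ∈ ξ '' Set.Icc i N := by
    intro γ hγ
    obtain ⟨j, hj, hfj⟩ : f γ ∈ ξ '' Set.Icc 1 N := hrange ▸ Set.mem_range_self γ
    refine ⟨j, ⟨(hξ.le_iff_le ⟨hi1, hiN⟩ hj).1 ?_, hj.2⟩, hfj⟩
    rw [hfa, hfj]
    exact hf hγ
  have hcard : (Set.Ici a).ncard ≤ N + 1 - i := calc
    (Set.Ici a).ncard ≤ (ξ '' Set.Icc i N).ncard :=
      Set.ncard_le_ncard_of_injOn f hmaps hinj.injOn ((Set.finite_Icc i N).image ξ)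
    _ ≤ (Set.Icc i N).ncard := Set.ncard_image_le (Set.finite_Icc i N)
    _ = N + 1 - i := by rw [← Finset.coe_Icc, Set.ncard_coe_finset, Nat.card_Icc]
  have hpos : 0 < (Set.Ici a).ncard := (Set.ncard_pos (Set.toFinite _)).2 ⟨a, le_rfl⟩
  rw [← hfa]
  exact (hξ.le_iff_le ⟨hi1, hiN⟩ ⟨by omega, by omega⟩).2 (by omega)

theorem StrictMonoOn.strictMono_comp_succ {Ξ : Type*} [Preorder Ξ] {N : ℕ} {ξ : ℕ → Ξ}
    (hξ : StrictMonoOn ξ (Set.Icc 1 N)) : StrictMono fun i : Fin N => ξ (i + 1) :=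
  fun i j hij => hξ ⟨by omega, by omega⟩ ⟨by omega, by omega⟩ (by simpa using hij)

theorem range_comp_succ {Ξ : Type*} (ξ : ℕ → Ξ) (N : ℕ) :
    Set.range (fun i : Fin N => ξ (i + 1)) = ξ '' Set.Icc 1 N := by
  rw [show (fun i : Fin N => ξ (i + 1)) = ξ ∘ fun i : Fin N => (i : ℕ) + 1 from rfl,
    Set.range_comp]
  congr 1
  ext m
  constructor
  · rintro ⟨i, rfl⟩
    exact ⟨Nat.le_add_left 1 i, i.isLt⟩
  · rintro ⟨hm1, hmN⟩
    exact ⟨⟨m - 1, by omega⟩, by simp only; omega⟩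

/-- If `β 0 ≺ β 1 ≺ ⋯ ≺ β (n-1)` is a chain in a finite poset `A` with `N` elements, then the
maximum of `∑ k, f (β k)` over all non-decreasing bijections `f : A → Ξ_N = {ξ 1 < ⋯ < ξ N}`
equals `∑ k, ξ (N - |Π^k| + 1)`, where `Π^k = {α : β k ⪯ α}`. -/
theorem max_sum_over_chain
    {A : Type*} [PartialOrder A] [Fintype A]
    {Ξ : Type*} [AddCommMonoid Ξ] [LinearOrder Ξ] [IsOrderedCancelAddMonoid Ξ]
    (N : ℕ) (hA : Fintype.card A = N) (ξ : ℕ → Ξ)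
    (hξ : ∀ i j, 1 ≤ i → i < j → j ≤ N → ξ i < ξ j)
    (n : ℕ) (β : Fin n → A) (hchain : ∀ k l : Fin n, k < l → β k < β l) :
    IsGreatest
      {S : Ξ | ∃ f : A → Ξ, Monotone f ∧ Function.Injective f ∧
        Set.range f = ξ '' Set.Icc 1 N ∧ S = ∑ k : Fin n, f (β k)}
      (∑ k : Fin n, ξ (N - ({α : A | β k ≤ α}.ncard) + 1)) := by
  subst hA
  have hξ' : StrictMonoOn ξ (Set.Icc 1 (Fintype.card A)) := fun i hi j hj hij =>
    hξ i j hi.1 hij hj.2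
  refine ⟨?_, ?_⟩
  · obtain ⟨e, he, hfinal⟩ :=
      exists_equivFin_strictMono_le_iff (show StrictMono β from fun k l => hchain k l).monotone
    have hg := hξ'.strictMono_comp_succ
    refine ⟨(fun i : Fin _ => ξ (i + 1)) ∘ e, hg.monotone.comp he.monotone,
      hg.injective.comp e.injective,
      by rw [Set.range_comp, e.range_eq_univ, Set.image_univ, range_comp_succ], ?_⟩
    refine sum_congr rfl fun k _ => ?_
    rw [show {α : A | β k ≤ α} = Set.Ici (β k) from rfl, ncard_Ici_eq_sub e (hfinal k),
      Nat.sub_sub_self (e (β k)).isLt.le]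
    rfl
  · rintro _ ⟨f, hf, hinj, hrange, rfl⟩
    exact sum_le_sum fun k _ => apply_le_of_range_eq_image hξ' hf hinj hrange (β k)
end

section
/- Let A be a finite poset with N elements, Ξ_N = {ξ_1 < ... < ξ_N}, and B = {β_1,...,β_n} ⊆ A. Suppose the lower sets Π_k = {α ∈ A : α ⪯ β_k} are pairwise disjoint and satisfy |Π_1| ≤ |Π_2| ≤ ... ≤ |Π_n|. Then the minimum of Σ_{k=1}^n f(β_k) over all non-decreasing bijections f : A → Ξ_N equals Σ_{k=1}^n ξ_{|Π_1| + ... + |Π_k|}. -/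
/-!
Write `f = ξ ∘ g`, so that `g` is a monotone bijection `A → {1, …, N}`. List the `β k` by
increasing `g`-value as `β (σ 0), …, β (σ (n-1))`. Everything in `Π (σ 0) ∪ ⋯ ∪ Π (σ k)` gets a
`g`-value at most `g (β (σ k))`, so by disjointness `g (β (σ k)) ≥ |Π (σ 0)| + ⋯ + |Π (σ k)|`,
and since `|Π j|` is nondecreasing in `j` this is at least `|Π 0| + ⋯ + |Π k|`. The bound is
attained by numbering `Π 0` first, then `Π 1`, and so on, each block along a linear extension of
`A` (so that `β k` comes last in its block), and the rest of `A` at the end.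
-/

open Finset Function

section MonotoneSum

variable {ι M : Type*} [AddCommMonoid M] [LinearOrder M] [IsOrderedAddMonoid M] {w : ι → M}

lemma Finset.sum_le_sum_of_card_eq_of_forall_le {s t : Finset ι} (hst : #s = #t)
    (h : ∀ x ∈ s, ∀ y ∈ t, w x ≤ w y) : ∑ x ∈ s, w x ≤ ∑ y ∈ t, w y := by
  obtain rfl | ht := t.eq_empty_or_nonempty
  · simp [card_eq_zero.mp hst]
  obtain ⟨y₀, hy₀, hmin⟩ := t.exists_min_image w ht
  calc ∑ x ∈ s, w x ≤ #s • w y₀ := sum_le_card_nsmul s w _ fun x hx => h x hx y₀ hy₀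
    _ = #t • w y₀ := by rw [hst]
    _ ≤ ∑ y ∈ t, w y := card_nsmul_le_sum t w _ hmin

lemma Monotone.sum_le_sum_of_isLowerSet [LinearOrder ι] (hw : Monotone w) {s t : Finset ι}
    (hs : IsLowerSet (s : Set ι)) (hst : #s = #t) : ∑ x ∈ s, w x ≤ ∑ x ∈ t, w x := by
  classical
  have hsdiff : ∑ x ∈ s \ t, w x ≤ ∑ x ∈ t \ s, w x :=
    sum_le_sum_of_card_eq_of_forall_le (card_sdiff_comm hst) fun x hx y hy =>
      hw (le_of_not_ge fun hyx => (mem_sdiff.mp hy).2 (hs hyx (mem_sdiff.mp hx).1))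
  rw [← sum_inter_add_sum_sdiff s t, ← sum_inter_add_sum_sdiff t s, inter_comm]
  exact add_le_add le_rfl hsdiff

end MonotoneSum

lemma Set.ncard_biUnion_finset {ι α : Type*} {t : Finset ι} {s : ι → Set α}
    (hs : ∀ i ∈ t, (s i).Finite) (h : (t : Set ι).PairwiseDisjoint s) :
    (⋃ i ∈ t, s i).ncard = ∑ i ∈ t, (s i).ncard := by
  rw [← finsum_mem_coe_finset, ← t.finite_toSet.ncard_biUnion hs h]
  simp only [Finset.mem_coe]

lemma Set.ncard_le_of_injOn_of_mapsTo_Icc {α : Type*} {s : Set α} {g : α → ℕ} {m : ℕ}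
    (hg : InjOn g s) (hmaps : ∀ a ∈ s, g a ∈ Set.Icc 1 m) : s.ncard ≤ m := by
  simpa using Set.ncard_le_ncard_of_injOn g hmaps hg

section Rank

variable {A L : Type*} [Finite A] [LinearOrder L] (key : A → L)

noncomputable def rankBy (a : A) : ℕ := {b | key b ≤ key a}.ncard

variable {key}

lemma rankBy_le_rankBy {a b : A} (h : key a ≤ key b) : rankBy key a ≤ rankBy key b :=
  Set.ncard_le_ncard fun _ hc => le_trans hc h

lemma rankBy_lt_rankBy {a b : A} (h : key a < key b) : rankBy key a < rankBy key b :=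
  Set.ncard_lt_ncard ⟨fun _ hc => le_trans hc h.le, fun hsub => h.not_ge (hsub le_rfl)⟩

lemma rankBy_injective (hkey : Injective key) : Injective (rankBy key) := by
  intro a b hab
  apply hkey
  by_contra hne
  rcases lt_or_gt_of_ne hne with h | h
  · exact (rankBy_lt_rankBy h).ne hab
  · exact (rankBy_lt_rankBy h).ne' hab

lemma rankBy_mem_Icc (a : A) : rankBy key a ∈ Set.Icc 1 (Nat.card A) :=
  ⟨(Set.ncard_pos).mpr ⟨a, le_rfl⟩, Set.ncard_le_card _⟩

lemma range_rankBy (hkey : Injective key) : Set.range (rankBy key) = Set.Icc 1 (Nat.card A) :=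
  Set.eq_of_subset_of_ncard_le (Set.range_subset_iff.mpr rankBy_mem_Icc)
    (by rw [Set.ncard_range_of_injective (rankBy_injective hkey), Set.ncard_Icc_nat]; omega)

end Rank

section BlockIndex

variable {A : Type*} [PartialOrder A] {n : ℕ} (β : Fin n → A)

open Classical in
noncomputable def blockIndex (α : A) : WithTop (Fin n) := ({k | α ≤ β k} : Finset (Fin n)).min

variable {β}

lemma blockIndex_mono : Monotone (blockIndex β) := fun _ _ hab =>
  min_mono fun _ hk => by simp only [mem_filter, mem_univ, true_and] at hk ⊢; exact hab.trans hk

lemma le_of_blockIndex_eq {α : A} {k : Fin n} (h : blockIndex β α = k) : α ≤ β k := by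
  classical
  simpa using mem_of_min h

lemma blockIndex_le_iff {α : A} {k : Fin n} : blockIndex β α ≤ k ↔ ∃ j ≤ k, α ≤ β j := by
  classical
  constructor
  · intro h
    obtain ⟨j, hj⟩ := WithTop.ne_top_iff_exists.mp (h.trans_lt (WithTop.coe_lt_top k)).ne
    exact ⟨j, WithTop.coe_le_coe.mp (hj ▸ h), le_of_blockIndex_eq hj.symm⟩
  · rintro ⟨j, hjk, hj⟩
    exact (min_le (by simpa using hj)).trans (WithTop.coe_le_coe.mpr hjk)

variable (hdisj : Pairwise (Disjoint on fun k => Set.Iic (β k)))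
include hdisj

lemma blockIndex_apply (k : Fin n) : blockIndex β (β k) = k := by
  classical
  have : ({j | β k ≤ β j} : Finset (Fin n)) = {k} := by
    ext j
    simp only [mem_filter, mem_univ, true_and, mem_singleton]
    refine ⟨fun hkj => ?_, fun hjk => hjk ▸ le_rfl⟩
    by_contra hne
    exact Set.disjoint_left.mp (hdisj hne) hkj (le_refl (β k))
  rw [blockIndex, this, min_singleton]

end BlockIndex

section BlockKey

variable {A : Type*} [PartialOrder A] {n : ℕ} (β : Fin n → A)

noncomputable def blockKey (α : A) : WithTop (Fin n) ×ₗ LinearExtension A :=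
  toLex (blockIndex β α, toLinearExtension α)

lemma blockKey_injective : Injective (blockKey β) := fun _ _ h =>
  congrArg (fun p => (ofLex p).2) h

lemma blockKey_strictMono : StrictMono (blockKey β) := fun _ _ hab =>
  Prod.Lex.toLex_strictMono <| Prod.mk_lt_mk_of_le_of_lt (blockIndex_mono hab.le)
    (toLinearExtension.monotone hab.le |>.lt_of_ne fun h => hab.ne h)

variable {β}

lemma blockKey_le_blockKey_apply_iff (hdisj : Pairwise (Disjoint on fun k => Set.Iic (β k)))
    {α : A} {k : Fin n} : blockKey β α ≤ blockKey β (β k) ↔ ∃ j ≤ k, α ≤ β j := by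
  rw [← blockIndex_le_iff, blockKey, blockKey, Prod.Lex.toLex_le_toLex', blockIndex_apply hdisj]
  exact ⟨And.left, fun h => ⟨h, fun heq => toLinearExtension.monotone (le_of_blockIndex_eq heq)⟩⟩

lemma rankBy_blockKey_apply [Finite A] (hdisj : Pairwise (Disjoint on fun k => Set.Iic (β k)))
    (k : Fin n) : rankBy (blockKey β) (β k) = ∑ j ∈ Iic k, (Set.Iic (β j)).ncard := by
  have : {α | blockKey β α ≤ blockKey β (β k)} = ⋃ j ∈ Iic k, Set.Iic (β j) := by
    ext α
    simp [blockKey_le_blockKey_apply_iff hdisj]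
  rw [rankBy, this, Set.ncard_biUnion_finset (fun _ _ => Set.toFinite _)
    fun i _ j _ hij => hdisj hij]

end BlockKey

lemma sum_ncard_Iic_le_apply_sort {A : Type*} [PartialOrder A] [Finite A] {n : ℕ} {β : Fin n → A}
    (hdisj : Pairwise (Disjoint on fun k => Set.Iic (β k)))
    (hβ : Monotone fun k => (Set.Iic (β k)).ncard) {g : A → ℕ} (hg : Injective g)
    (hmono : Monotone g) (hpos : ∀ α, 1 ≤ g α) (k : Fin n) :
    ∑ j ∈ Iic k, (Set.Iic (β j)).ncard ≤ g (β (Tuple.sort (g ∘ β) k)) := by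
  classical
  set σ := Tuple.sort (g ∘ β)
  have hsorted : Monotone (g ∘ β ∘ σ) := Tuple.monotone_sort (g ∘ β)
  calc ∑ j ∈ Iic k, (Set.Iic (β j)).ncard
      ≤ ∑ j ∈ (Iic k).image σ, (Set.Iic (β j)).ncard :=
        hβ.sum_le_sum_of_isLowerSet (by simpa using isLowerSet_Iic k)
          (card_image_of_injective _ σ.injective).symm
    _ = (⋃ j ∈ (Iic k).image σ, Set.Iic (β j)).ncard :=
        (Set.ncard_biUnion_finset (fun _ _ => Set.toFinite _) fun i _ j _ hij => hdisj hij).symm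
    _ ≤ g (β (σ k)) := by
        refine Set.ncard_le_of_injOn_of_mapsTo_Icc hg.injOn fun α hα => ⟨hpos α, ?_⟩
        simp only [Set.mem_iUnion, mem_image, mem_Iic] at hα
        obtain ⟨_, ⟨i, hik, rfl⟩, hαi⟩ := hα
        exact (hmono hαi).trans (hsorted hik)

/-- If the lower sets `Π_k = {α : α ⪯ β k}` of `β 0, …, β (n-1)` are pairwise disjoint and have
non-decreasing cardinalities, then the minimum of `∑ k, f (β k)` over all non-decreasing
bijections `f : A → Ξ_N = {ξ 1 < ⋯ < ξ N}` equals `∑ k, ξ (|Π_0| + ⋯ + |Π_k|)`. -/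
theorem min_sum_disjoint_lower_sets
    {A : Type*} [PartialOrder A] [Fintype A]
    {Ξ : Type*} [AddCommMonoid Ξ] [LinearOrder Ξ] [IsOrderedCancelAddMonoid Ξ]
    (N : ℕ) (hA : Fintype.card A = N) (ξ : ℕ → Ξ)
    (hξ : ∀ i j, 1 ≤ i → i < j → j ≤ N → ξ i < ξ j)
    (n : ℕ) (β : Fin n → A)
    (hdisj : ∀ k l : Fin n, k ≠ l → Disjoint {α : A | α ≤ β k} {α : A | α ≤ β l})
    (hcard : ∀ k l : Fin n, k ≤ l → {α : A | α ≤ β k}.ncard ≤ {α : A | α ≤ β l}.ncard) :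
    IsLeast
      {S : Ξ | ∃ f : A → Ξ, Monotone f ∧ Function.Injective f ∧
        Set.range f = ξ '' Set.Icc 1 N ∧ S = ∑ k : Fin n, f (β k)}
      (∑ k : Fin n, ξ (∑ j ∈ Finset.Iic k, {α : A | α ≤ β j}.ncard)) := by
  have hξ' : StrictMonoOn ξ (Set.Icc 1 N) := fun i hi j hj hij => hξ i j hi.1 hij hj.2
  have hN : Nat.card A = N := Nat.card_eq_fintype_card.trans hA
  set g₀ := rankBy (blockKey β)
  have hg₀ : ∀ α, g₀ α ∈ Set.Icc 1 N := hN ▸ rankBy_mem_Icc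
  have hg₀β (k : Fin n) : g₀ (β k) = ∑ j ∈ Iic k, {α : A | α ≤ β j}.ncard :=
    rankBy_blockKey_apply hdisj k
  refine ⟨⟨ξ ∘ g₀, ?_, ?_, ?_, ?_⟩, ?_⟩
  · exact fun a b hab => hξ'.monotoneOn (hg₀ a) (hg₀ b)
      (rankBy_le_rankBy ((blockKey_strictMono β).monotone hab))
  · exact fun a b h => rankBy_injective (blockKey_injective β) (hξ'.injOn (hg₀ a) (hg₀ b) h)
  · rw [Set.range_comp, range_rankBy (blockKey_injective β), hN]
  · simp only [comp_apply, hg₀β]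
  rintro _ ⟨f, hf, hfinj, hfrange, rfl⟩
  choose g hg hgf using fun α => (hfrange ▸ Set.mem_range_self α : f α ∈ ξ '' Set.Icc 1 N)
  obtain rfl : ξ ∘ g = f := funext hgf
  have hgmono : Monotone g := fun a b hab => (hξ'.le_iff_le (hg a) (hg b)).mp (hf hab)
  calc ∑ k, ξ (∑ j ∈ Iic k, {α : A | α ≤ β j}.ncard)
      ≤ ∑ k, ξ (g (β (Tuple.sort (g ∘ β) k))) := sum_le_sum fun k _ =>
        hξ'.monotoneOn (hg₀β k ▸ hg₀ (β k)) (hg _) <|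
          sum_ncard_Iic_le_apply_sort hdisj (fun k l hkl => hcard k l hkl) hfinj.of_comp hgmono
            (fun α => (hg α).1) k
    _ = ∑ k, ξ (g (β k)) := Equiv.sum_comp (Tuple.sort (g ∘ β)) fun k => ξ (g (β k))
end

section
/- Let n ∈ ℕ, let A = {(i,j) : 1 ≤ i,j ≤ n} with the coordinate-wise partial order (i₁,j₁) ⪯ (i₂,j₂) iff i₁ ≤ i₂ and j₁ ≤ j₂, and let Ξ_n = {1/n², 2/n², ..., n²/n²}. Then for every coordinate-wise non-decreasing bijection f : A → Ξ_n and every s with 1 ≤ s ≤ n, one has Σ_{v=1}^n f(s,v) ≥ s(n+1)/(2n). -/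
/-!
Write `f = k / n²` with `k` a monotone injection of the grid into `{1, …, n²}`. Then `k` maps the
lower set `Iic (s, v)`, which has `(s + 1)(v + 1)` cells, injectively into `{1, …, k (s, v)}`, so
`f (s, v) ≥ (s + 1)(v + 1) / n²`. Summing over the column gives `(s + 1) · n(n + 1)/2 / n²`.
-/

open Finset

theorem Finset.card_Iic_le_of_monotone_of_injective {α : Type*} [Preorder α]
    [LocallyFiniteOrderBot α] {k : α → ℕ} (hmono : Monotone k) (hinj : Function.Injective k)
    (hpos : ∀ a, 0 < k a) (a : α) : #(Iic a) ≤ k a :=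
  calc #(Iic a) ≤ #(Icc 1 (k a)) :=
        card_le_card_of_injOn k (fun b hb => mem_Icc.2 ⟨hpos b, hmono (mem_Iic.1 hb)⟩) hinj.injOn
    _ = k a := by simp

theorem card_Iic_div_le_of_monotone_of_injective {α : Type*} [Preorder α]
    [LocallyFiniteOrderBot α] {f : α → ℚ} {N : ℚ} (hN : 0 < N) (hmono : Monotone f)
    (hinj : Function.Injective f) (hrange : Set.range f ⊆ (fun k : ℕ => (k : ℚ) / N) '' Set.Ici 1)
    (a : α) : (#(Iic a) : ℚ) / N ≤ f a := by
  choose k hk hkf using fun b => hrange (Set.mem_range_self (f := f) b)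
  have hf : f = fun b => (k b : ℚ) / N := funext fun b => (hkf b).symm
  subst hf
  have hkmono : Monotone k := fun b c hbc => by
    exact_mod_cast (div_le_div_iff_of_pos_right hN).1 (hmono hbc)
  have hkinj : Function.Injective k := fun b c hbc => hinj (by simp only [hbc])
  rw [div_le_div_iff_of_pos_right hN]
  exact_mod_cast card_Iic_le_of_monotone_of_injective hkmono hkinj hk a

theorem Fin.card_Iic_prod {m n : ℕ} (p : Fin m × Fin n) : #(Iic p) = (p.1 + 1) * (p.2 + 1) := by
  rw [← Iic_product_Iic, card_product, Fin.card_Iic, Fin.card_Iic]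

theorem Fin.sum_univ_cast_add_one (n : ℕ) : ∑ v : Fin n, ((v : ℚ) + 1) = n * (n + 1) / 2 := by
  rw [Fin.sum_univ_eq_sum_range (fun i => (i : ℚ) + 1)]
  induction n with
  | zero => simp
  | succ n ih => rw [sum_range_succ, ih]; push_cast; ring

theorem column_sum_lower_bound_general
    (n : ℕ) (f : Fin n × Fin n → ℚ)
    (hmono : Monotone f) (hinj : Function.Injective f)
    (hrange : Set.range f = (fun k : ℕ => (k : ℚ) / (n ^ 2 : ℚ)) '' Set.Icc 1 (n ^ 2))
    (s : Fin n) :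
    ((s : ℕ) + 1 : ℚ) * (n + 1) / (2 * n) ≤ ∑ v : Fin n, f (s, v) := by
  have hn : (0 : ℚ) < n := by exact_mod_cast s.pos
  have hcell (v : Fin n) : ((s : ℚ) + 1) * ((v : ℚ) + 1) / n ^ 2 ≤ f (s, v) := by
    have := card_Iic_div_le_of_monotone_of_injective (by positivity) hmono hinj
      (hrange.trans_subset (Set.image_mono Set.Icc_subset_Ici_self)) (s, v)
    simpa [Fin.card_Iic_prod] using this
  calc ((s : ℕ) + 1 : ℚ) * (n + 1) / (2 * n)
      = ∑ v : Fin n, ((s : ℚ) + 1) * ((v : ℚ) + 1) / n ^ 2 := by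
        rw [← sum_div, ← mul_sum, Fin.sum_univ_cast_add_one]
        field_simp
    _ ≤ ∑ v : Fin n, f (s, v) := sum_le_sum fun v _ => hcell v

/-- For every coordinate-wise non-decreasing bijection `f` from the `n × n` grid onto
`Ξ_n = {k/n² : 1 ≤ k ≤ n²}` and every column `s` (1-indexed value `s.1 + 1`), the column sum
satisfies `∑ v, f (s, v) ≥ s (n+1) / (2n)`. -/
theorem column_sum_lower_bound
    (n : ℕ) (hn : 0 < n) (f : Fin n × Fin n → ℚ)
    (hmono : Monotone f) (hinj : Function.Injective f)
    (hrange : Set.range f = (fun k : ℕ => (k : ℚ) / (n ^ 2 : ℚ)) '' Set.Icc 1 (n ^ 2))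
    (s : Fin n) :
    ((s : ℕ) + 1 : ℚ) * (n + 1) / (2 * n) ≤ ∑ v : Fin n, f (s, v) :=
  column_sum_lower_bound_general n f hmono hinj hrange s
end

section
/- Let m : [0,1] → [0,1] be an increasing bijection, f : [0,1]² → [0,1] a measurable coordinate-wise non-decreasing function whose distribution function satisfies μ{(x,y) : f(x,y) > t} ≥ 1 − m(t) for all t ∈ [0,1], and let t : [0,1] → [0,1] be a continuous non-decreasing function. Then for every s ∈ [0,1], f(t(s), s) ≥ m^{-1}(t(s)·s), and consequently ∫_0^1 f(t(s), s) ds ≥ ∫_0^1 m^{-1}(t(s)·s) ds. -/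
/-!
Fix `(x, y)` in the unit square. By monotonicity of `f`, the superlevel set `{f > f x y}` misses
the rectangle `[0, x] × [0, y]`, so its measure is at most `1 - x y`. Comparing with the
hypothesis `μ{f > r} ≥ 1 - m r` at `r = f x y` gives `x y ≤ m (f x y)`, and applying the
monotone inverse `m⁻¹` yields `m⁻¹ (x y) ≤ f x y`. Along the curve `s ↦ (t s, s)` both sides are
monotone in `s`, hence integrable, and the integral inequality follows.
-/

open MeasureTheory Set

theorem StrictMonoOn.monotoneOn_of_invOn {α β : Type*} [LinearOrder α] [Preorder β]
    {m : α → β} {minv : β → α} {s : Set α} {t : Set β}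
    (hm : StrictMonoOn m s) (hmaps : MapsTo minv t s) (hinv : InvOn minv m s t) :
    MonotoneOn minv t := fun a ha b hb hab =>
  (hm.le_iff_le (hmaps ha) (hmaps hb)).mp (by rwa [hinv.2 ha, hinv.2 hb])

theorem volume_unitSquare_diff_Icc_prod_Icc {a b : ℝ} (ha : a ∈ Icc (0:ℝ) 1)
    (hb : b ∈ Icc (0:ℝ) 1) :
    volume ((Icc (0:ℝ) 1 ×ˢ Icc (0:ℝ) 1) \ (Icc 0 a ×ˢ Icc 0 b)) =
      ENNReal.ofReal (1 - a * b) := by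
  have hsub : Icc 0 a ×ˢ Icc 0 b ⊆ Icc (0:ℝ) 1 ×ˢ Icc (0:ℝ) 1 :=
    prod_mono (Icc_subset_Icc le_rfl ha.2) (Icc_subset_Icc le_rfl hb.2)
  have hrect : volume (Icc 0 a ×ˢ Icc 0 b) = ENNReal.ofReal (a * b) := by
    rw [Measure.volume_eq_prod, Measure.prod_prod, Real.volume_Icc, Real.volume_Icc,
      sub_zero, sub_zero, ENNReal.ofReal_mul ha.1]
  have hsquare : volume (Icc (0:ℝ) 1 ×ˢ Icc (0:ℝ) 1) = 1 := by
    rw [Measure.volume_eq_prod, Measure.prod_prod, Real.volume_Icc]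
    simp
  rw [measure_sdiff hsub (measurableSet_Icc.prod measurableSet_Icc).nullMeasurableSet
      (by rw [hrect]; exact ENNReal.ofReal_ne_top), hsquare, hrect,
    ENNReal.ofReal_sub _ (mul_nonneg ha.1 hb.1), ENNReal.ofReal_one]

section MonotoneOnSquare

variable (f : ℝ → ℝ → ℝ)

theorem superlevelSet_subset_unitSquare_diff_Icc_prod_Icc
    (hfmono : ∀ x₁ ∈ Icc (0:ℝ) 1, ∀ x₂ ∈ Icc (0:ℝ) 1, ∀ y₁ ∈ Icc (0:ℝ) 1, ∀ y₂ ∈ Icc (0:ℝ) 1,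
      x₁ ≤ x₂ → y₁ ≤ y₂ → f x₁ y₁ ≤ f x₂ y₂)
    {x y : ℝ} (hx : x ∈ Icc (0:ℝ) 1) (hy : y ∈ Icc (0:ℝ) 1) :
    {p : ℝ × ℝ | p ∈ Icc (0:ℝ) 1 ×ˢ Icc (0:ℝ) 1 ∧ f x y < f p.1 p.2} ⊆
      (Icc (0:ℝ) 1 ×ˢ Icc (0:ℝ) 1) \ (Icc 0 x ×ˢ Icc 0 y) := by
  rintro ⟨u, v⟩ ⟨huv, hlt⟩
  refine ⟨huv, fun hrect => hlt.not_ge ?_⟩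
  exact hfmono u huv.1 x hx v huv.2 y hy hrect.1.2 hrect.2.2

theorem mul_le_of_ofReal_sub_le_volume_superlevelSet
    (hfmono : ∀ x₁ ∈ Icc (0:ℝ) 1, ∀ x₂ ∈ Icc (0:ℝ) 1, ∀ y₁ ∈ Icc (0:ℝ) 1, ∀ y₂ ∈ Icc (0:ℝ) 1,
      x₁ ≤ x₂ → y₁ ≤ y₂ → f x₁ y₁ ≤ f x₂ y₂)
    {x y c : ℝ} (hx : x ∈ Icc (0:ℝ) 1) (hy : y ∈ Icc (0:ℝ) 1)
    (hc : ENNReal.ofReal (1 - c) ≤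
      volume {p : ℝ × ℝ | p ∈ Icc (0:ℝ) 1 ×ˢ Icc (0:ℝ) 1 ∧ f x y < f p.1 p.2}) :
    x * y ≤ c := by
  have hvol : ENNReal.ofReal (1 - c) ≤ ENNReal.ofReal (1 - x * y) :=
    calc ENNReal.ofReal (1 - c)
        ≤ volume {p : ℝ × ℝ | p ∈ Icc (0:ℝ) 1 ×ˢ Icc (0:ℝ) 1 ∧ f x y < f p.1 p.2} := hc
      _ ≤ volume ((Icc (0:ℝ) 1 ×ˢ Icc (0:ℝ) 1) \ (Icc 0 x ×ˢ Icc 0 y)) :=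
        measure_mono (superlevelSet_subset_unitSquare_diff_Icc_prod_Icc f hfmono hx hy)
      _ = ENNReal.ofReal (1 - x * y) := volume_unitSquare_diff_Icc_prod_Icc hx hy
  have := (ENNReal.ofReal_le_ofReal_iff (sub_nonneg.mpr (unitInterval.mul_mem hx hy).2)).mp hvol
  linarith

theorem le_apply_of_distribution_bound (m minv : ℝ → ℝ)
    (hmaps : MapsTo m (Icc 0 1) (Icc 0 1)) (hminv_mono : MonotoneOn minv (Icc 0 1))
    (hminv : LeftInvOn minv m (Icc 0 1))
    (hfmaps : ∀ x ∈ Icc (0:ℝ) 1, ∀ y ∈ Icc (0:ℝ) 1, f x y ∈ Icc (0:ℝ) 1)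
    (hfmono : ∀ x₁ ∈ Icc (0:ℝ) 1, ∀ x₂ ∈ Icc (0:ℝ) 1, ∀ y₁ ∈ Icc (0:ℝ) 1, ∀ y₂ ∈ Icc (0:ℝ) 1,
      x₁ ≤ x₂ → y₁ ≤ y₂ → f x₁ y₁ ≤ f x₂ y₂)
    (hdistr : ∀ r ∈ Icc (0:ℝ) 1, ENNReal.ofReal (1 - m r) ≤
      volume {p : ℝ × ℝ | p ∈ Icc (0:ℝ) 1 ×ˢ Icc (0:ℝ) 1 ∧ r < f p.1 p.2})
    {x y : ℝ} (hx : x ∈ Icc (0:ℝ) 1) (hy : y ∈ Icc (0:ℝ) 1) :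
    minv (x * y) ≤ f x y := by
  have hr := hfmaps x hx y hy
  calc minv (x * y)
      ≤ minv (m (f x y)) := hminv_mono (unitInterval.mul_mem hx hy) (hmaps hr)
        (mul_le_of_ofReal_sub_le_volume_superlevelSet f hfmono hx hy (hdistr _ hr))
    _ = f x y := hminv hr

end MonotoneOnSquare

theorem lower_estimate_line_integral_general
    (m minv : ℝ → ℝ)
    (hm : StrictMonoOn m (Set.Icc 0 1))
    (hmbij : Set.BijOn m (Set.Icc 0 1) (Set.Icc 0 1))
    (hminv : Set.InvOn minv m (Set.Icc 0 1) (Set.Icc 0 1))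
    (f : ℝ → ℝ → ℝ)
    (hfmaps : ∀ x ∈ Set.Icc (0:ℝ) 1, ∀ y ∈ Set.Icc (0:ℝ) 1, f x y ∈ Set.Icc (0:ℝ) 1)
    (hfmono : ∀ x₁ ∈ Set.Icc (0:ℝ) 1, ∀ x₂ ∈ Set.Icc (0:ℝ) 1,
      ∀ y₁ ∈ Set.Icc (0:ℝ) 1, ∀ y₂ ∈ Set.Icc (0:ℝ) 1,
      x₁ ≤ x₂ → y₁ ≤ y₂ → f x₁ y₁ ≤ f x₂ y₂)
    (hdistr : ∀ r ∈ Set.Icc (0:ℝ) 1,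
      ENNReal.ofReal (1 - m r) ≤
        volume {p : ℝ × ℝ | p ∈ Set.Icc (0:ℝ) 1 ×ˢ Set.Icc (0:ℝ) 1 ∧ r < f p.1 p.2})
    (t : ℝ → ℝ)
    (htmono : MonotoneOn t (Set.Icc 0 1))
    (htmaps : ∀ s ∈ Set.Icc (0:ℝ) 1, t s ∈ Set.Icc (0:ℝ) 1) :
    (∀ s ∈ Set.Icc (0:ℝ) 1, minv (t s * s) ≤ f (t s) s) ∧
    (∫ s in (0:ℝ)..1, minv (t s * s)) ≤ ∫ s in (0:ℝ)..1, f (t s) s := by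
  have hminv_mono : MonotoneOn minv (Icc 0 1) :=
    hm.monotoneOn_of_invOn (hmbij.symm hminv.symm).mapsTo hminv
  have pointwise : ∀ s ∈ Icc (0:ℝ) 1, minv (t s * s) ≤ f (t s) s := fun s hs =>
    le_apply_of_distribution_bound f m minv hmbij.mapsTo hminv_mono hminv.1 hfmaps hfmono
      hdistr (htmaps s hs) hs
  have hprod_mono : MonotoneOn (fun s => t s * s) (Icc 0 1) :=
    htmono.mul monotoneOn_id (fun s hs => (htmaps s hs).1) fun _ hs => hs.1
  have hlower_mono : MonotoneOn (fun s => minv (t s * s)) (Icc 0 1) :=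
    hminv_mono.comp hprod_mono fun s hs => unitInterval.mul_mem (htmaps s hs) hs
  have hupper_mono : MonotoneOn (fun s => f (t s) s) (Icc 0 1) := fun a ha b hb hab =>
    hfmono _ (htmaps a ha) _ (htmaps b hb) a ha b hb (htmono ha hb hab) hab
  refine ⟨pointwise, intervalIntegral.integral_mono_on zero_le_one ?_ ?_ pointwise⟩
  · exact MonotoneOn.intervalIntegrable (by rwa [uIcc_of_le zero_le_one])
  · exact MonotoneOn.intervalIntegrable (by rwa [uIcc_of_le zero_le_one])

/-- If `f : [0,1]² → [0,1]` is measurable, coordinate-wise non-decreasing and satisfies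
`μ{f > r} ≥ 1 − m r` for all `r ∈ [0,1]`, and `t : [0,1] → [0,1]` is continuous non-decreasing,
then `f (t s, s) ≥ m⁻¹(t s · s)` for every `s ∈ [0,1]` and hence
`∫₀¹ f (t s, s) ds ≥ ∫₀¹ m⁻¹(t s · s) ds`. -/
theorem lower_estimate_line_integral
    (m minv : ℝ → ℝ)
    (hm : StrictMonoOn m (Set.Icc 0 1))
    (hmbij : Set.BijOn m (Set.Icc 0 1) (Set.Icc 0 1))
    (hminv : Set.InvOn minv m (Set.Icc 0 1) (Set.Icc 0 1))
    (f : ℝ → ℝ → ℝ)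
    (hfmeas : Measurable fun p : ℝ × ℝ => f p.1 p.2)
    (hfmaps : ∀ x ∈ Set.Icc (0:ℝ) 1, ∀ y ∈ Set.Icc (0:ℝ) 1, f x y ∈ Set.Icc (0:ℝ) 1)
    (hfmono : ∀ x₁ ∈ Set.Icc (0:ℝ) 1, ∀ x₂ ∈ Set.Icc (0:ℝ) 1,
      ∀ y₁ ∈ Set.Icc (0:ℝ) 1, ∀ y₂ ∈ Set.Icc (0:ℝ) 1,
      x₁ ≤ x₂ → y₁ ≤ y₂ → f x₁ y₁ ≤ f x₂ y₂)
    (hdistr : ∀ r ∈ Set.Icc (0:ℝ) 1,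
      ENNReal.ofReal (1 - m r) ≤
        volume {p : ℝ × ℝ | p ∈ Set.Icc (0:ℝ) 1 ×ˢ Set.Icc (0:ℝ) 1 ∧ r < f p.1 p.2})
    (t : ℝ → ℝ)
    (htc : ContinuousOn t (Set.Icc 0 1)) (htmono : MonotoneOn t (Set.Icc 0 1))
    (htmaps : ∀ s ∈ Set.Icc (0:ℝ) 1, t s ∈ Set.Icc (0:ℝ) 1) :
    (∀ s ∈ Set.Icc (0:ℝ) 1, minv (t s * s) ≤ f (t s) s) ∧
    (∫ s in (0:ℝ)..1, minv (t s * s)) ≤ ∫ s in (0:ℝ)..1, f (t s) s :=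
  lower_estimate_line_integral_general m minv hm hmbij hminv f hfmaps hfmono hdistr t htmono htmaps
end

section
/- Fix α ∈ (0,1] and define f : [0,1]² → [0,1] by f(x,y) = αy if x ≤ α and f(x,y) = (1−α)y + α if x > α. Then f is coordinate-wise non-decreasing, satisfies μ{(x,y) : f(x,y) > t} ≥ 1 − t for all t ∈ [0,1], and ∫_0^1 f(α, y) dy = α/2. -/
open MeasureTheory Set

/-!
On `[0, α] × [0, 1]` the function is `αy` and on `(α, 1] × [0, 1]` it is `(1 - α)y + α`, so each
piece maps its strip affinely onto `[0, α]` resp. `[α, 1]`. Hence for `t < α` the superlevel set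
`{f > t}` contains the rectangle `[0, α] × (t/α, 1]` together with the whole strip `(α, 1] × [0, 1]`,
and for `t ≥ α` it contains `(α, 1] × ((t - α)/(1 - α), 1]`; in both cases the area is `1 - t`.
-/

noncomputable def extremalFun (α x y : ℝ) : ℝ :=
  if x ≤ α then α * y else (1 - α) * y + α

section extremalFun

variable {α : ℝ}

theorem extremalFun_le_extremalFun (hα : α ∈ Ioc (0 : ℝ) 1) {x₁ x₂ y₁ y₂ : ℝ}
    (hy₁ : y₁ ∈ Icc (0 : ℝ) 1) (hy₂ : y₂ ∈ Icc (0 : ℝ) 1) (hx : x₁ ≤ x₂) (hy : y₁ ≤ y₂) :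
    extremalFun α x₁ y₁ ≤ extremalFun α x₂ y₂ := by
  obtain ⟨hα0, hα1⟩ := hα
  unfold extremalFun
  split_ifs with h₁ h₂ h₂
  · exact mul_le_mul_of_nonneg_left hy hα0.le
  · nlinarith [hy₁.2, hy₂.1]
  · exact absurd (hx.trans h₂) h₁
  · nlinarith

theorem lt_extremalFun_of_le (hα : 0 < α) {t x y : ℝ} (hx : x ≤ α) :
    t < extremalFun α x y ↔ t / α < y := by
  rw [extremalFun, if_pos hx, div_lt_iff₀ hα, mul_comm]

theorem lt_extremalFun_of_lt (hα : α < 1) {t x y : ℝ} (hx : α < x) :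
    t < extremalFun α x y ↔ (t - α) / (1 - α) < y := by
  rw [extremalFun, if_neg hx.not_ge, div_lt_iff₀ (sub_pos.2 hα), ← sub_lt_iff_lt_add, mul_comm]

end extremalFun

theorem volume_Ioc_prod_Ioc (a b c d : ℝ) :
    volume (Ioc a b ×ˢ Ioc c d) = ENNReal.ofReal (b - a) * ENNReal.ofReal (d - c) := by
  rw [Measure.volume_eq_prod, Measure.prod_prod, Real.volume_Ioc, Real.volume_Ioc]

section superlevel

variable {α t : ℝ}

theorem ofReal_one_sub_le_volume_superlevel_of_lt (hα : α ∈ Ioc (0 : ℝ) 1) (ht : 0 ≤ t)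
    (htα : t < α) :
    ENNReal.ofReal (1 - t) ≤
      volume {p : ℝ × ℝ | p ∈ Icc (0 : ℝ) 1 ×ˢ Icc (0 : ℝ) 1 ∧ t < extremalFun α p.1 p.2} := by
  obtain ⟨hα0, hα1⟩ := hα
  have hsub : Ioc 0 α ×ˢ Ioc (t / α) 1 ∪ Ioc α 1 ×ˢ Ioc 0 1 ⊆
      {p : ℝ × ℝ | p ∈ Icc (0 : ℝ) 1 ×ˢ Icc (0 : ℝ) 1 ∧ t < extremalFun α p.1 p.2} := by
    rintro ⟨x, y⟩ (⟨hx, hy⟩ | ⟨hx, hy⟩)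
    · have hy0 : 0 ≤ y := (div_nonneg ht hα0.le).trans hy.1.le
      exact ⟨⟨⟨hx.1.le, hx.2.trans hα1⟩, hy0, hy.2⟩, (lt_extremalFun_of_le hα0 hx.2).2 hy.1⟩
    · refine ⟨⟨⟨hα0.le.trans hx.1.le, hx.2⟩, hy.1.le, hy.2⟩, ?_⟩
      rw [extremalFun, if_neg hx.1.not_ge]
      nlinarith [hy.1, hy.2]
  have hdisj : Disjoint (Ioc 0 α ×ˢ Ioc (t / α) 1) (Ioc α 1 ×ˢ Ioc (0 : ℝ) 1) :=
    disjoint_prod.2 (Or.inl (Ioc_disjoint_Ioc_of_le le_rfl))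
  have htα' : t / α ≤ 1 := (div_le_one hα0).2 htα.le
  have harea : α * (1 - t / α) + (1 - α) * (1 - 0) = 1 - t := by field_simp; ring
  calc ENNReal.ofReal (1 - t)
      = volume (Ioc 0 α ×ˢ Ioc (t / α) 1 ∪ Ioc α 1 ×ˢ Ioc (0 : ℝ) 1) := by
        rw [measure_union hdisj (measurableSet_Ioc.prod measurableSet_Ioc), volume_Ioc_prod_Ioc,
          volume_Ioc_prod_Ioc, sub_zero, ← ENNReal.ofReal_mul hα0.le,
          ← ENNReal.ofReal_mul (sub_nonneg.2 hα1), ← ENNReal.ofReal_add (by nlinarith) (by nlinarith),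
          harea]
    _ ≤ _ := measure_mono hsub

theorem ofReal_one_sub_le_volume_superlevel_of_le (hα : α ∈ Ioc (0 : ℝ) 1) (htα : α ≤ t)
    (ht : t < 1) :
    ENNReal.ofReal (1 - t) ≤
      volume {p : ℝ × ℝ | p ∈ Icc (0 : ℝ) 1 ×ˢ Icc (0 : ℝ) 1 ∧ t < extremalFun α p.1 p.2} := by
  obtain ⟨hα0, -⟩ := hα
  have hα1 : α < 1 := htα.trans_lt ht
  have h1α : 0 < 1 - α := sub_pos.2 hα1
  have hsub : Ioc α 1 ×ˢ Ioc ((t - α) / (1 - α)) 1 ⊆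
      {p : ℝ × ℝ | p ∈ Icc (0 : ℝ) 1 ×ˢ Icc (0 : ℝ) 1 ∧ t < extremalFun α p.1 p.2} := by
    rintro ⟨x, y⟩ ⟨hx, hy⟩
    have hy0 : 0 ≤ y := (div_nonneg (sub_nonneg.2 htα) h1α.le).trans hy.1.le
    exact ⟨⟨⟨hα0.le.trans hx.1.le, hx.2⟩, hy0, hy.2⟩, (lt_extremalFun_of_lt hα1 hx.1).2 hy.1⟩
  have harea : (1 - α) * (1 - (t - α) / (1 - α)) = 1 - t := by field_simp; ring
  calc ENNReal.ofReal (1 - t) = volume (Ioc α 1 ×ˢ Ioc ((t - α) / (1 - α)) 1) := by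
        rw [volume_Ioc_prod_Ioc, ← ENNReal.ofReal_mul h1α.le, harea]
    _ ≤ _ := measure_mono hsub

theorem ofReal_one_sub_le_volume_superlevel (hα : α ∈ Ioc (0 : ℝ) 1) (ht : 0 ≤ t) :
    ENNReal.ofReal (1 - t) ≤
      volume {p : ℝ × ℝ | p ∈ Icc (0 : ℝ) 1 ×ˢ Icc (0 : ℝ) 1 ∧ t < extremalFun α p.1 p.2} := by
  rcases lt_or_ge t α with htα | htα
  · exact ofReal_one_sub_le_volume_superlevel_of_lt hα ht htα
  rcases lt_or_ge t 1 with ht1 | ht1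
  · exact ofReal_one_sub_le_volume_superlevel_of_le hα htα ht1
  · rw [ENNReal.ofReal_eq_zero.2 (sub_nonpos.2 ht1)]
    exact zero_le

end superlevel

theorem integral_extremalFun_self (α : ℝ) : ∫ y in (0 : ℝ)..1, extremalFun α α y = α / 2 := by
  simp only [extremalFun, le_rfl, if_true]
  rw [intervalIntegral.integral_const_mul, integral_id]
  ring

/-- The extremal function `f (x,y) = αy` for `x ≤ α`, `f (x,y) = (1−α)y + α` for `x > α`
(`α ∈ (0,1]`) is coordinate-wise non-decreasing, satisfies `μ{f > t} ≥ 1 − t` for all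
`t ∈ [0,1]`, and `∫₀¹ f (α, y) dy = α/2`. -/
theorem extremal_function_properties
    (α : ℝ) (hα : α ∈ Set.Ioc (0:ℝ) 1)
    (f : ℝ → ℝ → ℝ)
    (hf : ∀ x y : ℝ, f x y = if x ≤ α then α * y else (1 - α) * y + α) :
    (∀ x₁ ∈ Set.Icc (0:ℝ) 1, ∀ x₂ ∈ Set.Icc (0:ℝ) 1,
      ∀ y₁ ∈ Set.Icc (0:ℝ) 1, ∀ y₂ ∈ Set.Icc (0:ℝ) 1,
      x₁ ≤ x₂ → y₁ ≤ y₂ → f x₁ y₁ ≤ f x₂ y₂) ∧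
    (∀ t ∈ Set.Icc (0:ℝ) 1,
      ENNReal.ofReal (1 - t) ≤
        volume {p : ℝ × ℝ | p ∈ Set.Icc (0:ℝ) 1 ×ˢ Set.Icc (0:ℝ) 1 ∧ t < f p.1 p.2}) ∧
    (∫ y in (0:ℝ)..1, f α y) = α / 2 := by
  obtain rfl : f = extremalFun α := funext₂ hf
  exact ⟨fun _ _ _ _ _ hy₁ _ hy₂ hx hy => extremalFun_le_extremalFun hα hy₁ hy₂ hx hy,
    fun _ ht => ofReal_one_sub_le_volume_superlevel hα ht.1, integral_extremalFun_self α⟩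
end

section
/- Let m : [0,1] → [0,1] be an increasing bijection and t : [0,1] → [0,1] a continuous non-decreasing function. For s ∈ [0,1] let Π_s = [0,t(s)]×[0,s] \ ⋃_{u<s} [0,t(u)]×[0,u], and define f(x,y) = m^{-1}(t(s)·s) for (x,y) ∈ Π_s, and f(x,y) = m^{-1}(t(1) + (1−t(1))y) for x > t(1). Then f is coordinate-wise non-decreasing on [0,1]². -/
/-!
Put `σ(x, y) = max y s₀(x)`, where `s₀(x)` is the least `s ∈ [0,1]` with `x ≤ t(s)`; the least
one exists for `x ≤ t(1)` because `t` is continuous. Then `(x, y) ∈ Π_σ`, so on `x ≤ t(1)` the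
function is `m⁻¹(g(σ(x, y)))` with `g(s) = t(s)·s`. `σ` is non-decreasing in `x` and in `y`,
`g` is non-decreasing, and on `x > t(1)` the value `t(1) + (1 − t(1))y` grows with `y` and
dominates `g(1) = t(1)`. Finally `m⁻¹` is non-decreasing.
-/

open Set

theorem monotoneOn_of_invOn_of_strictMonoOn {α β : Type*} [LinearOrder α] [Preorder β]
    {m : α → β} {minv : β → α} {s : Set α} {t : Set β} (hm : StrictMonoOn m s)
    (hminv : InvOn minv m s t) (hmaps : MapsTo minv t s) : MonotoneOn minv t := by
  intro a ha b hb hab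
  rwa [← hm.le_iff_le (hmaps ha) (hmaps hb), hminv.2 ha, hminv.2 hb]

/-- The piece `Π_s` of the paper. -/
def piece (t : ℝ → ℝ) (s : ℝ) : Set (ℝ × ℝ) :=
  (Icc 0 (t s) ×ˢ Icc 0 s) \ ⋃ u ∈ Ico 0 s, Icc 0 (t u) ×ˢ Icc 0 u

noncomputable def coverLevel (t : ℝ → ℝ) (x : ℝ) : ℝ :=
  sInf {s ∈ Icc 0 1 | x ≤ t s}

/-- The level `σ` of the piece containing `p` when `p.1 ≤ t 1`. -/
noncomputable def pieceLevel (t : ℝ → ℝ) (p : ℝ × ℝ) : ℝ :=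
  max p.2 (coverLevel t p.1)

/-- The argument of `m⁻¹` in the definition of `f`. -/
noncomputable def levelValue (t : ℝ → ℝ) (p : ℝ × ℝ) : ℝ :=
  if p.1 ≤ t 1 then t (pieceLevel t p) * pieceLevel t p else t 1 + (1 - t 1) * p.2

section

variable {t : ℝ → ℝ} {x x' s : ℝ}

theorem coverLevel_le (hs : s ∈ Icc (0 : ℝ) 1) (hxs : x ≤ t s) : coverLevel t x ≤ s :=
  csInf_le ⟨0, fun _ hu => hu.1.1⟩ ⟨hs, hxs⟩

theorem coverLevel_mem (htc : ContinuousOn t (Icc 0 1)) (hx : x ≤ t 1) :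
    coverLevel t x ∈ Icc (0 : ℝ) 1 ∧ x ≤ t (coverLevel t x) := by
  have hclosed : IsClosed {s ∈ Icc (0 : ℝ) 1 | x ≤ t s} :=
    htc.preimage_isClosed_of_isClosed isClosed_Icc isClosed_Ici
  exact hclosed.csInf_mem ⟨1, right_mem_Icc.2 zero_le_one, hx⟩ ⟨0, fun _ hu => hu.1.1⟩

theorem coverLevel_mono (htc : ContinuousOn t (Icc 0 1)) (hx' : x' ≤ t 1) (hxx' : x ≤ x') :
    coverLevel t x ≤ coverLevel t x' :=
  have h := coverLevel_mem htc hx'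
  coverLevel_le h.1 (hxx'.trans h.2)

theorem pieceLevel_mem (htc : ContinuousOn t (Icc 0 1)) {p : ℝ × ℝ}
    (hp : p ∈ Icc (0 : ℝ) 1 ×ˢ Icc (0 : ℝ) 1) (hpt : p.1 ≤ t 1) :
    pieceLevel t p ∈ Icc (0 : ℝ) 1 :=
  ⟨le_max_of_le_left hp.2.1, max_le hp.2.2 (coverLevel_mem htc hpt).1.2⟩

theorem mem_piece_pieceLevel (htc : ContinuousOn t (Icc 0 1))
    (htmono : MonotoneOn t (Icc 0 1)) {p : ℝ × ℝ}
    (hp : p ∈ Icc (0 : ℝ) 1 ×ˢ Icc (0 : ℝ) 1) (hpt : p.1 ≤ t 1) :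
    p ∈ piece t (pieceLevel t p) := by
  obtain ⟨hc, hxc⟩ := coverLevel_mem htc hpt
  have hσ := pieceLevel_mem htc hp hpt
  refine ⟨⟨⟨hp.1.1, hxc.trans (htmono hc hσ (le_max_right _ _))⟩, hp.2.1, le_max_left _ _⟩, ?_⟩
  simp only [mem_iUnion]
  rintro ⟨u, ⟨hu0, huσ⟩, ⟨-, hxu⟩, -, hyu⟩
  exact huσ.not_ge (max_le hyu (coverLevel_le ⟨hu0, huσ.le.trans hσ.2⟩ hxu))

theorem monotoneOn_mul_id (htmono : MonotoneOn t (Icc 0 1))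
    (htmaps : ∀ s ∈ Icc (0 : ℝ) 1, t s ∈ Icc (0 : ℝ) 1) :
    MonotoneOn (fun s => t s * s) (Icc 0 1) :=
  fun _ hs _ hs' h => mul_le_mul (htmono hs hs' h) h hs.1 (htmaps _ hs').1

theorem levelValue_mem (htc : ContinuousOn t (Icc 0 1))
    (htmaps : ∀ s ∈ Icc (0 : ℝ) 1, t s ∈ Icc (0 : ℝ) 1) {p : ℝ × ℝ}
    (hp : p ∈ Icc (0 : ℝ) 1 ×ˢ Icc (0 : ℝ) 1) : levelValue t p ∈ Icc (0 : ℝ) 1 := by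
  obtain ⟨ht0, ht1⟩ := htmaps 1 (right_mem_Icc.2 zero_le_one)
  unfold levelValue
  split_ifs with hpt
  · have hσ := pieceLevel_mem htc hp hpt
    exact unitInterval.mul_mem (htmaps _ hσ) hσ
  · obtain ⟨hy0, hy1⟩ := hp.2
    constructor <;> nlinarith

theorem levelValue_monotoneOn (htc : ContinuousOn t (Icc 0 1))
    (htmono : MonotoneOn t (Icc 0 1)) (htmaps : ∀ s ∈ Icc (0 : ℝ) 1, t s ∈ Icc (0 : ℝ) 1) :
    MonotoneOn (levelValue t) (Icc 0 1 ×ˢ Icc 0 1) := by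
  intro p hp q hq hpq
  obtain ⟨h1, h2⟩ := Prod.le_def.1 hpq
  have h11 : (1 : ℝ) ∈ Icc (0 : ℝ) 1 := right_mem_Icc.2 zero_le_one
  have hg := monotoneOn_mul_id htmono htmaps
  obtain ⟨ht0, ht1⟩ := htmaps 1 h11
  unfold levelValue
  split_ifs with hp1 hq1 hq1
  · exact hg (pieceLevel_mem htc hp hp1) (pieceLevel_mem htc hq hq1)
      (max_le_max h2 (coverLevel_mono htc hq1 h1))
  · have hσ := pieceLevel_mem htc hp hp1
    have : t (pieceLevel t p) * pieceLevel t p ≤ t 1 * 1 := hg hσ h11 hσ.2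
    nlinarith [hq.2.1]
  · exact absurd (h1.trans hq1) hp1
  · nlinarith

end

/-- The extremal function defined by `f = m⁻¹(t(s)·s)` on
`Π_s = [0,t(s)]×[0,s] \ ⋃_{u<s} [0,t(u)]×[0,u]` and `f (x,y) = m⁻¹(t(1)+(1−t(1))y)` for
`x > t(1)` is coordinate-wise non-decreasing on `[0,1]²`. -/
theorem extremal_function_monotone
    (m minv : ℝ → ℝ)
    (hm : StrictMonoOn m (Set.Icc 0 1))
    (hmbij : Set.BijOn m (Set.Icc 0 1) (Set.Icc 0 1))
    (hminv : Set.InvOn minv m (Set.Icc 0 1) (Set.Icc 0 1))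
    (t : ℝ → ℝ)
    (htc : ContinuousOn t (Set.Icc 0 1)) (htmono : MonotoneOn t (Set.Icc 0 1))
    (htmaps : ∀ s ∈ Set.Icc (0:ℝ) 1, t s ∈ Set.Icc (0:ℝ) 1)
    (f : ℝ × ℝ → ℝ)
    (hfPi : ∀ s ∈ Set.Icc (0:ℝ) 1, ∀ p ∈
      (Set.Icc (0:ℝ) (t s) ×ˢ Set.Icc (0:ℝ) s) \
        ⋃ u ∈ Set.Ico (0:ℝ) s, (Set.Icc (0:ℝ) (t u) ×ˢ Set.Icc (0:ℝ) u),
      f p = minv (t s * s))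
    (hfright : ∀ p : ℝ × ℝ, p ∈ Set.Icc (0:ℝ) 1 ×ˢ Set.Icc (0:ℝ) 1 → t 1 < p.1 →
      f p = minv (t 1 + (1 - t 1) * p.2)) :
    ∀ p ∈ Set.Icc (0:ℝ) 1 ×ˢ Set.Icc (0:ℝ) 1, ∀ q ∈ Set.Icc (0:ℝ) 1 ×ˢ Set.Icc (0:ℝ) 1,
      p.1 ≤ q.1 → p.2 ≤ q.2 → f p ≤ f q := by
  have hf : ∀ p ∈ Icc (0 : ℝ) 1 ×ˢ Icc (0 : ℝ) 1, f p = minv (levelValue t p) := by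
    intro p hp
    unfold levelValue
    split_ifs with hpt
    · exact hfPi _ (pieceLevel_mem htc hp hpt) p (mem_piece_pieceLevel htc htmono hp hpt)
    · exact hfright p hp (not_le.1 hpt)
  have hminv_mono : MonotoneOn minv (Icc 0 1) :=
    monotoneOn_of_invOn_of_strictMonoOn hm hminv (hmbij.symm hminv.symm).mapsTo
  intro p hp q hq h1 h2
  rw [hf p hp, hf q hq]
  exact hminv_mono (levelValue_mem htc htmaps hp) (levelValue_mem htc htmaps hq)
    (levelValue_monotoneOn htc htmono htmaps hp hq (Prod.le_def.2 ⟨h1, h2⟩))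
end
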